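/- arXiv:2401.17936 — 2 statements merged into one kernel-verified Lean document; each statement's English description precedes it below -/
import Mathlib

section
/- Let x:(−∞,0]→ℝ be a Borel measurable function, let μ be a finite positive Borel measure on (−∞,0], and let {ε_m}⊂[0,1/5] be a sequence decreasing to ε₀∈[0,1/5]. Then haus( ∫_{−∞}^0 (χ_{ε_m}∘x) dμ , ∫_{−∞}^0 (χ_{ε₀}∘x) dμ ) → 0 as m→∞, where the integrals are Aumann integrals. -/
open MeasureTheory Set Filter Topology Pointwise

noncomputable section

/-- Index set for the synaptic variables `z i j`, `i ≠ j`. -/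
abbrev IdxZ (n : ℕ) := {p : Fin n × Fin n // p.1 ≠ p.2}

/-- The state space `ℝ^{n²} = ℝ^n × ℝ^{n(n-1)}`, with the norm
`‖(x,z)‖ = max (‖x‖_∞) (‖z‖_∞)` (product of supremum norms). -/
abbrev NState (n : ℕ) := (Fin n → ℝ) × (IdxZ n → ℝ)

/-- The `C_γ` norm: `‖u‖_γ = sup_{t ≤ 0} e^{γ t} ‖u t‖`. -/
def gNorm (γ : ℝ) {E : Type*} [NormedAddCommGroup E] (u : ℝ → E) : ℝ :=
  ⨆ t : Iic (0 : ℝ), Real.exp (γ * t.1) * ‖u t.1‖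

/-- Membership in `C_γ`: continuity on `(-∞,0]`, existence of a finite limit of
`e^{γ t} u t` as `t → -∞`, and boundedness of `e^{γ t} ‖u t‖` on `(-∞,0]`. -/
def InC (γ : ℝ) {E : Type*} [NormedAddCommGroup E] [NormedSpace ℝ E] (u : ℝ → E) : Prop :=
  ContinuousOn u (Iic 0) ∧
    (∃ L : E, Tendsto (fun t => Real.exp (γ * t) • u t) atBot (𝓝 L)) ∧
    BddAbove (range fun t : Iic (0 : ℝ) => Real.exp (γ * t.1) * ‖u t.1‖)

/-- The history `u_t(s) = u (t+s)`. -/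
def hist {E : Type*} (u : ℝ → E) (t : ℝ) : ℝ → E := fun s => u (t + s)

/-- The sigmoidal function `σ_ε (s) = 1/(1+e^{-s/ε})`. -/
def sigm (ε s : ℝ) : ℝ := 1 / (1 + Real.exp (-s / ε))

/-- Hypothesis (D): `A i`, `B p` locally Lipschitz and bounded below by `α > 0`. -/
def HypD {n : ℕ} (α : ℝ) (A : Fin n → ℝ → ℝ) (B : IdxZ n → ℝ → ℝ) : Prop :=
  0 < α ∧ (∀ i, LocallyLipschitz (A i) ∧ ∀ s, α ≤ A i s) ∧
    ∀ p, LocallyLipschitz (B p) ∧ ∀ s, α ≤ B p s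

/-- Hypothesis (M): `∫_{-∞}^0 e^{-γ t} dμ_p (t) < ∞`. -/
def HypM {n : ℕ} (γ : ℝ) (μ : IdxZ n → Measure ℝ) : Prop :=
  ∀ p, ∫⁻ t in Iic (0 : ℝ), ENNReal.ofReal (Real.exp (-γ * t)) ∂(μ p) < ⊤

/-- Hypothesis (I): continuity of the external stimuli. -/
def HypI {n : ℕ} (Istim : Fin n → ℝ → ℝ) : Prop := ∀ i, Continuous (Istim i)

/-- Decay term `D`. -/
def decayT {n : ℕ} (A : Fin n → ℝ → ℝ) (B : IdxZ n → ℝ → ℝ) (u : ℝ → NState n) : NState n :=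
  (fun i => -(A i ((u 0).1 i)) * (u 0).1 i, fun p => -(B p ((u 0).2 p)) * (u 0).2 p)

/-- Sigmoidal excitation and inhibition term `Σ^ε`. -/
def sigTerm {n : ℕ} (ε : ℝ) (μ : IdxZ n → Measure ℝ) (c d : IdxZ n → ℝ)
    (Γ : Fin n → ℝ) (u : ℝ → NState n) : NState n :=
  (fun i => ∑ k : Fin n,
      if h : k ≠ i then
        ((u 0).2 ⟨(k, i), h⟩ - c ⟨(k, i), h⟩) *
          ∫ τ in Iic (0 : ℝ), sigm ε ((u τ).1 k - Γ k) ∂(μ ⟨(k, i), h⟩)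
      else 0,
    fun p =>
      d p * (∫ τ in Iic (0 : ℝ), sigm ε ((u τ).1 p.1.1 - Γ p.1.1) ∂(μ p)) *
        max ((u 0).1 p.1.2) 0)

/-- Stimulus term `I(t) = ((I_i(t))_i, 0)`. -/
def stimT {n : ℕ} (Istim : Fin n → ℝ → ℝ) (t : ℝ) : NState n :=
  (fun i => Istim i t, 0)

/-- Right-hand side `f_ε(t,u) = D(u) + Σ^ε(u) + I(t)` of the sigmoidal system. -/
def fEps {n : ℕ} (ε : ℝ) (A : Fin n → ℝ → ℝ) (B : IdxZ n → ℝ → ℝ)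
    (μ : IdxZ n → Measure ℝ) (c d : IdxZ n → ℝ) (Γ : Fin n → ℝ)
    (Istim : Fin n → ℝ → ℝ) (t : ℝ) (u : ℝ → NState n) : NState n :=
  decayT A B u + sigTerm ε μ c d Γ u + stimT Istim t

/-- Solution of the sigmoidal system on `[t₀, t₁)` with initial datum `u₀` at `t₀`. -/
def IsSigSolOn {n : ℕ} (ε : ℝ) (A : Fin n → ℝ → ℝ) (B : IdxZ n → ℝ → ℝ)
    (μ : IdxZ n → Measure ℝ) (c d : IdxZ n → ℝ) (Γ : Fin n → ℝ)
    (Istim : Fin n → ℝ → ℝ) (t₀ t₁ : ℝ) (u₀ u : ℝ → NState n) : Prop :=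
  (∀ s ≤ (0 : ℝ), u (t₀ + s) = u₀ s) ∧ ContinuousOn u (Iio t₁) ∧
    ∀ t ∈ Ico t₀ t₁, HasDerivAt u (fEps ε A B μ c d Γ Istim t (hist u t)) t

/-- Solution of the sigmoidal system on the closed interval `[t₀, t₁]`. -/
def IsSigSolOnC {n : ℕ} (ε : ℝ) (A : Fin n → ℝ → ℝ) (B : IdxZ n → ℝ → ℝ)
    (μ : IdxZ n → Measure ℝ) (c d : IdxZ n → ℝ) (Γ : Fin n → ℝ)
    (Istim : Fin n → ℝ → ℝ) (t₀ t₁ : ℝ) (u₀ u : ℝ → NState n) : Prop :=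
  (∀ s ≤ (0 : ℝ), u (t₀ + s) = u₀ s) ∧ ContinuousOn u (Iic t₁) ∧
    ∀ t ∈ Ico t₀ t₁, HasDerivAt u (fEps ε A B μ c d Γ Istim t (hist u t)) t

/-- `b(ε) = ε log((1-ε)/ε)` for `ε ≠ 0`, `b(0) = 0`. -/
def bfun (ε : ℝ) : ℝ := if ε = 0 then 0 else ε * Real.log ((1 - ε) / ε)

/-- The set-valued function `χ_ε`. -/
def chiSet (ε s : ℝ) : Set ℝ :=
  if s < -bfun ε then Icc 0 ε else if s ≤ bfun ε then Icc 0 1 else Icc (1 - ε) 1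

/-- Aumann integral over `(-∞,0]` of a set-valued map `F` with respect to `μ`:
the set of integrals of integrable measurable selectors of `F`. -/
def aumann (F : ℝ → Set ℝ) (μ : Measure ℝ) : Set ℝ :=
  {y | ∃ s : ℝ → ℝ, Measurable s ∧ IntegrableOn s (Iic 0) μ ∧
      (∀ t ≤ (0 : ℝ), s t ∈ F t) ∧ y = ∫ t in Iic (0 : ℝ), s t ∂μ}

/-- Directed Hausdorff pseudometric `haus(A,B) = sup_{a∈A} inf_{b∈B} |a-b|`. -/
def hausd (S T : Set ℝ) : ℝ :=
  sSup ((fun a => sInf ((fun b => |a - b|) '' T)) '' S)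

/-- The `i`-th factor of `X^ε(u)`: the Minkowski sum over `k ≠ i` of
`(z_{ki}(0) - c_{ki}) • ∫ χ_ε(x_k(τ)-Γ_k) dμ_{ki}(τ)`. -/
def XsetX {n : ℕ} (ε : ℝ) (μ : IdxZ n → Measure ℝ) (c : IdxZ n → ℝ)
    (Γ : Fin n → ℝ) (u : ℝ → NState n) (i : Fin n) : Set ℝ :=
  {y | ∃ g : Fin n → ℝ, g i = 0 ∧
      (∀ k, ∀ h : k ≠ i,
        g k ∈ ((u 0).2 ⟨(k, i), h⟩ - c ⟨(k, i), h⟩) •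
          aumann (fun τ => chiSet ε ((u τ).1 k - Γ k)) (μ ⟨(k, i), h⟩)) ∧
      y = ∑ k, g k}

/-- The set-valued map `X^ε : C_γ → 𝒫(ℝ^{n²})`. -/
def Xset {n : ℕ} (ε : ℝ) (μ : IdxZ n → Measure ℝ) (c d : IdxZ n → ℝ)
    (Γ : Fin n → ℝ) (u : ℝ → NState n) : Set (NState n) :=
  {v | (∀ i, v.1 i ∈ XsetX ε μ c Γ u i) ∧
      ∀ p : IdxZ n, v.2 p ∈ (d p * max ((u 0).1 p.1.2) 0) •
        aumann (fun τ => chiSet ε ((u τ).1 p.1.1 - Γ p.1.1)) (μ p)}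

/-- Solution of the `ε`-inflated differential inclusion on `[t₀,t₁]` with initial
datum `u₀` at `t₀`: absolutely continuous on `[t₀,t₁]` (expressed in integral form)
with `u'(t) = D(u_t) + Σ(t) + I(t)` a.e. for some integrable selector `Σ(t) ∈ X^ε(u_t)`. -/
def IsIncSolOn {n : ℕ} (ε : ℝ) (A : Fin n → ℝ → ℝ) (B : IdxZ n → ℝ → ℝ)
    (μ : IdxZ n → Measure ℝ) (c d : IdxZ n → ℝ) (Γ : Fin n → ℝ)
    (Istim : Fin n → ℝ → ℝ) (t₀ t₁ : ℝ) (u₀ u : ℝ → NState n) : Prop :=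
  (∀ s ≤ (0 : ℝ), u (t₀ + s) = u₀ s) ∧ ContinuousOn u (Icc t₀ t₁) ∧
    ∃ S : ℝ → NState n,
      (∀ t ∈ Icc t₀ t₁, S t ∈ Xset ε μ c d Γ (hist u t)) ∧
      IntegrableOn (fun s => decayT A B (hist u s) + S s + stimT Istim s) (Icc t₀ t₁) ∧
      ∀ t ∈ Icc t₀ t₁,
        u t = u₀ 0 + ∫ s in t₀..t, (decayT A B (hist u s) + S s + stimT Istim s)

/-- Clamped history: the canonical representative in `C_γ` of the history `u_t`. -/
def clampHist {n : ℕ} (u : ℝ → NState n) (t : ℝ) : ℝ → NState n :=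
  fun s => u (t + min s 0)

/-- Attainability set `Φ^ε(t, t₀, u₀)` of the `ε`-inflated inclusion. -/
def attain {n : ℕ} (ε : ℝ) (A : Fin n → ℝ → ℝ) (B : IdxZ n → ℝ → ℝ)
    (μ : IdxZ n → Measure ℝ) (c d : IdxZ n → ℝ) (Γ : Fin n → ℝ)
    (Istim : Fin n → ℝ → ℝ) (t t₀ : ℝ) (u₀ : ℝ → NState n) : Set (ℝ → NState n) :=
  {v | ∃ u, IsIncSolOn ε A B μ c d Γ Istim t₀ t u₀ u ∧ v = clampHist u t}

/-- Total mass `|μ_p|` of the measure `μ_p` on `(-∞,0]`. -/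
def mTot {n : ℕ} (μ : IdxZ n → Measure ℝ) (p : IdxZ n) : ℝ := (μ p (Iic 0)).toReal

/-- Hypothesis (A). -/
def HypA {n : ℕ} (α : ℝ) (μ : IdxZ n → Measure ℝ) (d : IdxZ n → ℝ) : Prop :=
  ∃ lx lz nx nz eta eps : IdxZ n → ℝ,
    (∀ p, lx p ∈ ({1, mTot μ p ^ 2, d p ^ 2, mTot μ p ^ 2 * d p ^ 2} : Set ℝ) ∧
        lz p ∈ ({1, mTot μ p ^ 2, d p ^ 2, mTot μ p ^ 2 * d p ^ 2} : Set ℝ) ∧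
        lx p * lz p = mTot μ p ^ 2 * d p ^ 2 ∧
        nx p ∈ ({1, mTot μ p ^ 2} : Set ℝ) ∧ nz p ∈ ({1, mTot μ p ^ 2} : Set ℝ) ∧
        nx p * nz p = mTot μ p ^ 2 ∧ 0 < eta p ∧ 0 < eps p ∧
        nz p / eta p + lz p / eps p < 2 * α) ∧
    ∀ i : Fin n,
      (∑ k : Fin n, if h : k ≠ i then
          nx ⟨(k, i), h⟩ * eta ⟨(k, i), h⟩ + lx ⟨(k, i), h⟩ * eps ⟨(k, i), h⟩
        else 0) < 2 * α

/-- Directed Hausdorff "distance" between subsets of `C_γ`, w.r.t. `‖·‖_γ`. -/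
def setDistG (γ : ℝ) {n : ℕ} (S T : Set (ℝ → NState n)) : ℝ :=
  sSup ((fun a => sInf ((fun b => gNorm γ (fun s => a s - b s)) '' T)) '' S)

/-! On `[0, 1/5]` the set `χ_ε(s)` is an interval `[chiLo ε s, chiHi ε s]`, so the Aumann
integral of `χ_ε ∘ x` is the interval between the integrals of the two endpoint functions
(every intermediate value is hit by a convex combination of them). The function `b` is continuous
and increasing on `[0, 1/5]`; hence, as `ε_m ↓ ε₀`, the endpoints converge pointwise — at the
thresholds `±b(ε₀)` monotonicity of `b` keeps them constant — and by dominated convergence so do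
their integrals. The directed Hausdorff distance between two intervals is at most the larger
displacement of their endpoints. -/

-- Also at `ε = 0` and `ε = 1`, thanks to the convention `log 0 = 0`.
open Real in
lemma bfun_eq (ε : ℝ) : bfun ε = ε * log (1 - ε) - ε * log ε := by
  rcases eq_or_ne ε 0 with rfl | h0
  · simp [bfun]
  rcases eq_or_ne ε 1 with rfl | h1
  · simp [bfun]
  rw [bfun, if_neg h0, log_div (sub_ne_zero.mpr h1.symm) h0, mul_sub]

lemma continuousAt_bfun {ε : ℝ} (h : ε ≠ 1) : ContinuousAt bfun ε := by
  have hlog : ContinuousAt (fun e : ℝ => Real.log (1 - e)) ε :=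
    (continuousAt_const.sub continuousAt_id).log (sub_ne_zero.mpr h.symm)
  rw [funext bfun_eq]
  exact (continuousAt_id.mul hlog).sub Real.continuous_mul_log.continuousAt

open Real in
lemma monotoneOn_bfun : MonotoneOn bfun (Icc 0 (1 / 5)) := by
  refine monotoneOn_of_hasDerivWithinAt_nonneg (convex_Icc _ _)
    (fun e he => (continuousAt_bfun (by linarith [he.2])).continuousWithinAt)
    (f' := fun e => log (1 - e) - e / (1 - e) - (log e + 1)) (fun e he => ?_) (fun e he => ?_)
  all_goals rw [interior_Icc] at he; obtain ⟨he0, he5⟩ := he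
  · have h1 : HasDerivAt (fun e : ℝ => Real.log (1 - e)) (-1 / (1 - e)) e := by
      simpa using ((hasDerivAt_id' e).const_sub 1).log (sub_pos.mpr (by linarith)).ne'
    have hd := ((hasDerivAt_id' e).mul h1).sub (hasDerivAt_mul_log he0.ne')
    rw [funext bfun_eq]
    exact (hd.congr_deriv (by ring)).hasDerivWithinAt
  · -- `log ((1 - e) / e) ≥ log 4 > 5 / 4 ≥ 1 / (1 - e)` on `(0, 1/5)`
    have hlog4 : log 4 ≤ log (1 - e) - log e := by
      rw [← log_div (by linarith) he0.ne']
      exact log_le_log (by norm_num) (by rw [le_div_iff₀ he0]; linarith)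
    have hlog4_gt : (5 : ℝ) / 4 < log 4 := by
      rw [show (4 : ℝ) = 2 ^ 2 by norm_num, log_pow]
      linarith [log_two_gt_d9]
    have hfrac : e / (1 - e) ≤ 1 / 4 := by rw [div_le_iff₀ (by linarith)]; linarith
    linarith

lemma bfun_nonneg {ε : ℝ} (h0 : 0 ≤ ε) (h : ε ≤ 1 / 2) : 0 ≤ bfun ε := by
  rcases h0.eq_or_lt with rfl | h0
  · simp [bfun]
  rw [bfun, if_neg h0.ne']
  exact mul_nonneg h0.le (Real.log_nonneg (by rw [le_div_iff₀ h0]; linarith))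

def chiLo (ε s : ℝ) : ℝ := if s ≤ bfun ε then 0 else 1 - ε

def chiHi (ε s : ℝ) : ℝ := if s < -bfun ε then ε else 1

lemma chiSet_eq_Icc {ε : ℝ} (hb : 0 ≤ bfun ε) (s : ℝ) :
    chiSet ε s = Icc (chiLo ε s) (chiHi ε s) := by
  unfold chiSet chiLo chiHi
  split_ifs <;> first | rfl | linarith

lemma chiLo_le_chiHi {ε : ℝ} (h0 : 0 ≤ ε) (hb : 0 ≤ bfun ε) (s : ℝ) :
    chiLo ε s ≤ chiHi ε s := by
  unfold chiLo chiHi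
  split_ifs <;> linarith

lemma abs_chiLo_le_one {ε : ℝ} (h : ε ∈ Icc (0 : ℝ) 1) (s : ℝ) : |chiLo ε s| ≤ 1 := by
  unfold chiLo
  split_ifs <;> rw [abs_le] <;> constructor <;> linarith [h.1, h.2]

lemma abs_chiHi_le_one {ε : ℝ} (h : ε ∈ Icc (0 : ℝ) 1) (s : ℝ) : |chiHi ε s| ≤ 1 := by
  unfold chiHi
  split_ifs <;> rw [abs_le] <;> constructor <;> linarith [h.1, h.2]

lemma measurable_chiLo (ε : ℝ) : Measurable (chiLo ε) :=
  Measurable.ite measurableSet_Iic measurable_const measurable_const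

lemma measurable_chiHi (ε : ℝ) : Measurable (chiHi ε) :=
  Measurable.ite measurableSet_Iio measurable_const measurable_const

lemma tendsto_chiLo {ι : Type*} {l : Filter ι} {ε : ι → ℝ} {ε₀ : ℝ}
    (hlim : Tendsto ε l (𝓝 ε₀)) (hb : ∀ i, bfun ε₀ ≤ bfun (ε i))
    (hblim : Tendsto (fun i => bfun (ε i)) l (𝓝 (bfun ε₀))) (s : ℝ) :
    Tendsto (fun i => chiLo (ε i) s) l (𝓝 (chiLo ε₀ s)) := by
  by_cases hs : s ≤ bfun ε₀
  · simp only [chiLo, if_pos hs, if_pos (hs.trans (hb _)), tendsto_const_nhds]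
  · rw [chiLo, if_neg hs]
    refine (tendsto_const_nhds.sub hlim).congr' ?_
    filter_upwards [hblim.eventually_lt_const (not_le.mp hs)] with i hi
    rw [chiLo, if_neg (not_le.mpr hi)]

lemma tendsto_chiHi {ι : Type*} {l : Filter ι} {ε : ι → ℝ} {ε₀ : ℝ}
    (hlim : Tendsto ε l (𝓝 ε₀)) (hb : ∀ i, bfun ε₀ ≤ bfun (ε i))
    (hblim : Tendsto (fun i => bfun (ε i)) l (𝓝 (bfun ε₀))) (s : ℝ) :
    Tendsto (fun i => chiHi (ε i) s) l (𝓝 (chiHi ε₀ s)) := by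
  by_cases hs : s < -bfun ε₀
  · rw [chiHi, if_pos hs]
    refine hlim.congr' ?_
    filter_upwards [hblim.neg.eventually_const_lt hs] with i hi
    rw [chiHi, if_pos hi]
  · have hs' : ∀ i, ¬ s < -bfun (ε i) := fun i => by linarith [hb i]
    simp only [chiHi, if_neg hs, if_neg (hs' _), tendsto_const_nhds]

lemma aumann_Icc {f g : ℝ → ℝ} (hf : Measurable f) (hg : Measurable g) {μ : Measure ℝ}
    (hfi : IntegrableOn f (Iic 0) μ) (hgi : IntegrableOn g (Iic 0) μ)
    (hfg : ∀ t ≤ (0 : ℝ), f t ≤ g t) :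
    aumann (fun t => Icc (f t) (g t)) μ
      = Icc (∫ t in Iic (0 : ℝ), f t ∂μ) (∫ t in Iic (0 : ℝ), g t ∂μ) := by
  ext y
  constructor
  · rintro ⟨s, -, hsi, hs, rfl⟩
    exact ⟨setIntegral_mono_on hfi hsi measurableSet_Iic fun t ht => (hs t ht).1,
      setIntegral_mono_on hsi hgi measurableSet_Iic fun t ht => (hs t ht).2⟩
  · rintro ⟨hfy, hyg⟩
    set If := ∫ t in Iic (0 : ℝ), f t ∂μ with hIf
    set Ig := ∫ t in Iic (0 : ℝ), g t ∂μ with hIg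
    rcases hfy.eq_or_lt with rfl | hlt
    · exact ⟨f, hf, hfi, fun t ht => ⟨le_rfl, hfg t ht⟩, rfl⟩
    -- the selector is the convex combination `(1 - θ) f + θ g` hitting `y`
    set θ := (y - If) / (Ig - If)
    have hgap : 0 < Ig - If := by linarith
    have hθ0 : 0 ≤ θ := div_nonneg (by linarith) hgap.le
    have hθ1 : θ ≤ 1 := (div_le_one hgap).mpr (by linarith)
    refine ⟨fun t => (1 - θ) * f t + θ * g t, (hf.const_mul _).add (hg.const_mul _),
      (hfi.const_mul _).add (hgi.const_mul _), fun t ht => ?_, ?_⟩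
    · have hfgt := hfg t ht
      constructor <;> nlinarith
    · rw [integral_add (hfi.const_mul _) (hgi.const_mul _), integral_const_mul,
        integral_const_mul, ← hIf, ← hIg]
      linear_combination -(div_mul_cancel₀ (y - If) hgap.ne')

lemma aumann_chiSet {x : ℝ → ℝ} (hx : Measurable x) (μ : Measure ℝ) [IsFiniteMeasure μ]
    {ε : ℝ} (h0 : 0 ≤ ε) (h : ε ≤ 1 / 2) :
    aumann (fun t => chiSet ε (x t)) μ
      = Icc (∫ t in Iic (0 : ℝ), chiLo ε (x t) ∂μ) (∫ t in Iic (0 : ℝ), chiHi ε (x t) ∂μ) := by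
  have hb := bfun_nonneg h0 h
  have hε : ε ∈ Icc (0 : ℝ) 1 := ⟨h0, by linarith⟩
  simp only [chiSet_eq_Icc hb]
  refine aumann_Icc ((measurable_chiLo ε).comp hx) ((measurable_chiHi ε).comp hx) ?_ ?_
    fun t _ => chiLo_le_chiHi h0 hb (x t)
  · exact (integrable_const (1 : ℝ)).mono' ((measurable_chiLo ε).comp hx).aestronglyMeasurable
      (ae_of_all _ fun t => abs_chiLo_le_one hε (x t))
  · exact (integrable_const (1 : ℝ)).mono' ((measurable_chiHi ε).comp hx).aestronglyMeasurable
      (ae_of_all _ fun t => abs_chiHi_le_one hε (x t))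

lemma hausd_nonneg (S T : Set ℝ) : 0 ≤ hausd S T :=
  Real.sSup_nonneg <| by
    rintro _ ⟨a, -, rfl⟩
    exact Real.sInf_nonneg <| by
      rintro _ ⟨b, -, rfl⟩
      exact abs_nonneg _

lemma hausd_le {S T : Set ℝ} {r : ℝ} (hr : 0 ≤ r) (h : ∀ a ∈ S, ∃ b ∈ T, |a - b| ≤ r) :
    hausd S T ≤ r := by
  refine Real.sSup_le ?_ hr
  rintro _ ⟨a, ha, rfl⟩
  obtain ⟨b, hb, hab⟩ := h a ha
  refine (csInf_le ⟨0, ?_⟩ (mem_image_of_mem _ hb)).trans hab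
  rintro _ ⟨b', -, rfl⟩
  exact abs_nonneg _

lemma hausd_Icc_le (a b c d : ℝ) : hausd (Icc a b) (Icc c d) ≤ max |a - c| |b - d| := by
  have hM : 0 ≤ max |a - c| |b - d| := (abs_nonneg _).trans (le_max_left _ _)
  rcases lt_or_ge d c with hdc | hcd
  · refine Real.sSup_le ?_ hM
    rintro _ ⟨y, -, rfl⟩
    simp [Icc_eq_empty_of_lt hdc, hM]
  refine hausd_le hM fun y hy => ?_
  -- the nearest point of `[c, d]` to `y`
  refine ⟨max c (min y d), ⟨le_max_left _ _, max_le hcd (min_le_right _ _)⟩, ?_⟩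
  obtain ⟨hay, hyb⟩ := hy
  have hc : c - a ≤ |a - c| := by rw [abs_sub_comm]; exact le_abs_self _
  have hd : b - d ≤ |b - d| := le_abs_self _
  rw [abs_le]
  constructor <;> rcases max_cases c (min y d) with h | h <;>
    rcases min_cases y d with h' | h' <;>
    linarith [le_max_left |a - c| |b - d|, le_max_right |a - c| |b - d|, abs_nonneg (a - c)]

lemma tendsto_integral_of_abs_le_const {α ι : Type*} [MeasurableSpace α] {μ : Measure α}
    [IsFiniteMeasure μ] {l : Filter ι} [l.IsCountablyGenerated] {F : ι → α → ℝ} {f : α → ℝ}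
    {C : ℝ} (hF : ∀ i, Measurable (F i)) (hC : ∀ i t, |F i t| ≤ C)
    (hlim : ∀ t, Tendsto (fun i => F i t) l (𝓝 (f t))) :
    Tendsto (fun i => ∫ t, F i t ∂μ) l (𝓝 (∫ t, f t ∂μ)) :=
  tendsto_integral_filter_of_dominated_convergence (fun _ => C)
    (Eventually.of_forall fun i => (hF i).aestronglyMeasurable)
    (Eventually.of_forall fun i => ae_of_all _ (hC i)) (integrable_const C) (ae_of_all _ hlim)

/-- convergence, in the directed Hausdorff pseudometric, of the Aumann
integrals of `χ_{ε_m} ∘ x` to that of `χ_{ε₀} ∘ x` as `ε_m ↓ ε₀`. -/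
theorem stmt9 (x : ℝ → ℝ) (hx : Measurable x) (μ : Measure ℝ) [IsFiniteMeasure μ]
    (ε : ℕ → ℝ) (hεr : ∀ m, ε m ∈ Icc (0 : ℝ) (1 / 5))
    (ε₀ : ℝ) (hε₀ : ε₀ ∈ Icc (0 : ℝ) (1 / 5))
    (hanti : Antitone ε) (hlim : Tendsto ε atTop (𝓝 ε₀)) :
    Tendsto (fun m => hausd (aumann (fun t => chiSet (ε m) (x t)) μ)
        (aumann (fun t => chiSet ε₀ (x t)) μ)) atTop (𝓝 0) := by
  have hb : ∀ m, bfun ε₀ ≤ bfun (ε m) := fun m =>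
    monotoneOn_bfun hε₀ (hεr m) (hanti.le_of_tendsto hlim m)
  have hblim : Tendsto (fun m => bfun (ε m)) atTop (𝓝 (bfun ε₀)) :=
    (continuousAt_bfun (by linarith [hε₀.2])).tendsto.comp hlim
  have hε₁ : ∀ m, ε m ∈ Icc (0 : ℝ) 1 := fun m => ⟨(hεr m).1, by linarith [(hεr m).2]⟩
  have hlo := tendsto_integral_of_abs_le_const (μ := μ.restrict (Iic 0))
    (fun m => (measurable_chiLo (ε m)).comp hx) (fun m t => abs_chiLo_le_one (hε₁ m) (x t))
    fun t => tendsto_chiLo hlim hb hblim (x t)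
  have hhi := tendsto_integral_of_abs_le_const (μ := μ.restrict (Iic 0))
    (fun m => (measurable_chiHi (ε m)).comp hx) (fun m t => abs_chiHi_le_one (hε₁ m) (x t))
    fun t => tendsto_chiHi hlim hb hblim (x t)
  have hbound := ((tendsto_sub_nhds_zero_iff.mpr hlo).abs.max
    (tendsto_sub_nhds_zero_iff.mpr hhi).abs)
  rw [abs_zero, max_self] at hbound
  refine squeeze_zero (fun m => hausd_nonneg _ _) (fun m => ?_) hbound
  rw [aumann_chiSet hx μ (hεr m).1 (by linarith [(hεr m).2]),
    aumann_chiSet hx μ hε₀.1 (by linarith [hε₀.2])]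
  exact hausd_Icc_le _ _ _ _

end
end

section
/- Let ε∈[0,1/5], let μ be a finite positive Borel measure on (−∞,0], and let π:ℝ^{n²}→ℝ be a canonical coordinate projection. Suppose {x^m}⊂C_γ and x∈C_γ are such that ‖x^m−x‖_γ decreases monotonically to 0 as m→∞. Then haus( ∫_{−∞}^0 χ_ε(π(x^m(τ))) dμ(τ) , ∫_{−∞}^0 χ_ε(π(x(τ))) dμ(τ) ) → 0 as m→∞, where the integrals are Aumann integrals. -/
open MeasureTheory Set Filter Topology Pointwise

noncomputable section

/-- Lower endpoint of `chiSet`. -/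
def loF (ε b a : ℝ) : ℝ := if b < a then 1 - ε else 0

/-- Upper endpoint of `chiSet`. -/
def hiF (ε b a : ℝ) : ℝ := if a < -b then ε else 1

lemma bfun_nonneg_s10 {ε : ℝ} (hε : ε ∈ Icc (0 : ℝ) (1 / 5)) : 0 ≤ bfun ε := by
  unfold bfun
  split_ifs with h
  · exact le_refl 0
  · have hε0 : 0 < ε := lt_of_le_of_ne hε.1 (Ne.symm h)
    have h1 : (1 : ℝ) ≤ (1 - ε) / ε := by
      rw [le_div_iff₀ hε0]; nlinarith [hε.2]
    exact mul_nonneg hε.1 (Real.log_nonneg h1)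

lemma chi_eq {ε : ℝ} (hε : ε ∈ Icc (0 : ℝ) (1 / 5)) (a : ℝ) :
    chiSet ε a = Icc (loF ε (bfun ε) a) (hiF ε (bfun ε) a) := by
  have hb := bfun_nonneg_s10 hε
  unfold chiSet loF hiF
  split_ifs <;> first | rfl | (exfalso; linarith)

lemma loF_nonneg {ε b : ℝ} (hε1 : ε ≤ 1) (a : ℝ) : 0 ≤ loF ε b a := by
  unfold loF; split_ifs <;> linarith

lemma hiF_le_one {ε b : ℝ} (hε1 : ε ≤ 1) (a : ℝ) : hiF ε b a ≤ 1 := by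
  unfold hiF; split_ifs <;> linarith

lemma loF_le_one {ε : ℝ} (hε0 : 0 ≤ ε) (b a : ℝ) : loF ε b a ≤ 1 := by
  unfold loF; split_ifs <;> linarith

lemma loF_le_hiF {ε b : ℝ} (hb : 0 ≤ b) (hε0 : 0 ≤ ε) (hε1 : ε ≤ 1) (a : ℝ) :
    loF ε b a ≤ hiF ε b a := by
  unfold loF hiF; split_ifs <;> linarith

lemma mono_chi {ε b d aF am : ℝ} (hb : 0 ≤ b) (hε0 : 0 ≤ ε) (hε1 : ε ≤ 1)
    (hdist : |am - aF| ≤ d)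
    (hnot : ¬(b < |aF| ∧ |aF| ≤ b + d)) :
    loF ε b aF ≤ loF ε b am ∧ hiF ε b am ≤ hiF ε b aF := by
  push_neg at hnot
  have hd : 0 ≤ d := (abs_nonneg _).trans hdist
  obtain ⟨h1, h2⟩ := abs_le.mp hdist
  by_cases hY : b < |aF|
  · have h3 := hnot hY
    rcases abs_cases aF with ⟨he, _⟩ | ⟨he, _⟩ <;> rw [he] at h3 <;>
      · constructor <;> (simp only [loF, hiF]; split_ifs <;> linarith)
  · have h4 := abs_le.mp (not_lt.mp hY)
    constructor <;> (simp only [loF, hiF]; split_ifs <;> linarith)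

/-- convergence of the Aumann integrals of `χ_ε ∘ π ∘ x^m` to that of
`χ_ε ∘ π ∘ x` when `‖x^m - x‖_γ ↓ 0`, for a canonical projection `π`. -/
theorem stmt10 {n : ℕ} (hn : 2 ≤ n) (γ : ℝ) (hγ : 0 < γ)
    (ε : ℝ) (hε : ε ∈ Icc (0 : ℝ) (1 / 5)) (μ : Measure ℝ) [IsFiniteMeasure μ]
    (π : NState n → ℝ)
    (hπ : (∃ i, π = fun u => u.1 i) ∨ ∃ p : IdxZ n, π = fun u => u.2 p)
    (x : ℕ → ℝ → NState n) (x₀ : ℝ → NState n)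
    (hx : ∀ m, InC γ (x m)) (hx₀ : InC γ x₀)
    (hanti : Antitone fun m => gNorm γ (fun t => x m t - x₀ t))
    (hlim : Tendsto (fun m => gNorm γ (fun t => x m t - x₀ t)) atTop (𝓝 0)) :
    Tendsto (fun m => hausd (aumann (fun τ => chiSet ε (π (x m τ))) μ)
        (aumann (fun τ => chiSet ε (π (x₀ τ))) μ)) atTop (𝓝 0) := by
  have hε1 : ε ≤ 1 := hε.2.trans (by norm_num)
  have hb : 0 ≤ bfun ε := bfun_nonneg_s10 hε
  set b := bfun ε with hbdef
  set δ : ℕ → ℝ := fun m => gNorm γ (fun t => x m t - x₀ t) with hδdef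
  -- π is continuous and 1-Lipschitz
  have hπc : Continuous π := by
    rcases hπ with ⟨i, rfl⟩ | ⟨p, rfl⟩
    · exact (continuous_apply i).comp continuous_fst
    · exact (continuous_apply p).comp continuous_snd
  have hπd : ∀ u v : NState n, |π u - π v| ≤ ‖u - v‖ := by
    rcases hπ with ⟨i, rfl⟩ | ⟨p, rfl⟩
    · intro u v
      have h : |u.1 i - v.1 i| = ‖(u - v).1 i‖ := by simp [Real.norm_eq_abs]
      rw [h]
      exact (norm_le_pi_norm (u - v).1 i).trans (norm_fst_le _)
    · intro u v
      have h : |u.2 p - v.2 p| = ‖(u - v).2 p‖ := by simp [Real.norm_eq_abs]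
      rw [h]
      exact (norm_le_pi_norm (u - v).2 p).trans (norm_snd_le _)
  -- boundedness of the weighted norms of the differences
  have hbdd : ∀ m, BddAbove (range fun t : Iic (0 : ℝ) =>
      Real.exp (γ * t.1) * ‖x m t.1 - x₀ t.1‖) := by
    intro m
    obtain ⟨M1, hM1⟩ := (hx m).2.2
    obtain ⟨M2, hM2⟩ := hx₀.2.2
    refine ⟨M1 + M2, ?_⟩
    rintro y ⟨t, rfl⟩
    dsimp only
    have h1 : Real.exp (γ * t.1) * ‖x m t.1‖ ≤ M1 := hM1 ⟨t, rfl⟩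
    have h2 : Real.exp (γ * t.1) * ‖x₀ t.1‖ ≤ M2 := hM2 ⟨t, rfl⟩
    have h3 : ‖x m t.1 - x₀ t.1‖ ≤ ‖x m t.1‖ + ‖x₀ t.1‖ := norm_sub_le _ _
    have h4 := mul_le_mul_of_nonneg_left h3 (Real.exp_nonneg (γ * t.1))
    rw [mul_add] at h4
    linarith
  have hδ0 : ∀ m, 0 ≤ δ m := fun m =>
    (mul_nonneg (Real.exp_nonneg _) (norm_nonneg _)).trans
      (le_ciSup (hbdd m) (⟨0, Set.self_mem_Iic⟩ : Iic (0 : ℝ)))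
  -- pointwise control of the projections
  have hpt : ∀ m, ∀ τ : ℝ, τ ≤ 0 →
      |π (x m τ) - π (x₀ τ)| ≤ Real.exp (-(γ * τ)) * δ m := by
    intro m τ hτ
    have h1 : Real.exp (γ * τ) * ‖x m τ - x₀ τ‖ ≤ δ m :=
      le_ciSup (hbdd m) (⟨τ, Set.mem_Iic.mpr hτ⟩ : Iic (0 : ℝ))
    have h2 := mul_le_mul_of_nonneg_left h1 (Real.exp_nonneg (-(γ * τ)))
    rw [← mul_assoc, ← Real.exp_add, neg_add_cancel, Real.exp_zero, one_mul] at h2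
    exact (hπd _ _).trans h2
  -- the continuous clamped projection of `x₀`
  set F : ℝ → ℝ := fun τ => π (x₀ (min τ 0)) with hFdef
  have hFc : Continuous F :=
    hπc.comp (hx₀.1.comp_continuous (continuous_id.min continuous_const)
      (fun τ => Set.mem_Iic.mpr (min_le_right τ 0)))
  have hFeq : ∀ τ : ℝ, τ ≤ 0 → F τ = π (x₀ τ) := by
    intro τ hτ
    rw [hFdef]
    simp [min_eq_left hτ]
  -- the exceptional sets
  set E : ℕ → Set ℝ :=
    fun m => {τ | b < |F τ| ∧ |F τ| ≤ b + Real.exp (-(γ * τ)) * δ m} with hEdef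
  have hEm : ∀ m, MeasurableSet (E m) := by
    intro m
    have h1 : Measurable fun τ => |F τ| := hFc.abs.measurable
    have h2 : Measurable fun τ => b + Real.exp (-(γ * τ)) * δ m := by fun_prop
    exact (measurableSet_lt measurable_const h1).inter (measurableSet_le h1 h2)
  have hEanti : Antitone E := by
    intro m m' hmm' τ hτ
    refine ⟨hτ.1, hτ.2.trans ?_⟩
    have h1 := mul_le_mul_of_nonneg_left (hanti hmm') (Real.exp_nonneg (-(γ * τ)))
    linarith
  have hEempty : ⋂ m, E m = ∅ := by
    ext τ
    simp only [Set.mem_iInter, Set.mem_empty_iff_false, iff_false]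
    intro h
    have h1 : b < |F τ| := (h 0).1
    have hpos : (0 : ℝ) < Real.exp (-(γ * τ)) := Real.exp_pos _
    have hc : 0 < (|F τ| - b) / Real.exp (-(γ * τ)) := div_pos (by linarith) hpos
    obtain ⟨m, hm⟩ := (hlim.eventually (eventually_lt_nhds hc)).exists
    have h2 : |F τ| ≤ b + Real.exp (-(γ * τ)) * δ m := (h m).2
    rw [lt_div_iff₀ hpos] at hm
    rw [mul_comm] at hm
    linarith
  -- convergence of the measures of the exceptional sets
  have hν : Tendsto (fun m => (μ.restrict (Iic (0 : ℝ)) (E m)).toReal) atTop (𝓝 0) := by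
    have h1 : Tendsto (fun m => μ.restrict (Iic (0 : ℝ)) (E m)) atTop (𝓝 0) := by
      have h2 := tendsto_measure_iInter_atTop (μ := μ.restrict (Iic (0 : ℝ)))
        (fun m => (hEm m).nullMeasurableSet) hEanti ⟨0, measure_ne_top _ _⟩
      rwa [hEempty, measure_empty] at h2
    have h3 := (ENNReal.tendsto_toReal (by norm_num)).comp h1
    rw [ENNReal.toReal_zero] at h3
    exact h3
  -- the directed Hausdorff distance is bounded by the measure of the exceptional set
  have hmain : ∀ m, hausd (aumann (fun τ => chiSet ε (π (x m τ))) μ)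
      (aumann (fun τ => chiSet ε (π (x₀ τ))) μ)
      ≤ (μ.restrict (Iic (0 : ℝ)) (E m)).toReal := by
    intro m
    unfold hausd
    apply Real.sSup_le _ ENNReal.toReal_nonneg
    rintro y ⟨a, ha, rfl⟩
    simp only [aumann, Set.mem_setOf_eq] at ha
    obtain ⟨s, hsmeas, hsint, hsmem, rfl⟩ := ha
    dsimp only
    -- the clamped selector
    set s' : ℝ → ℝ := fun τ => max (loF ε b (F τ)) (min (hiF ε b (F τ)) (s τ)) with hs'def
    have hs'meas : Measurable s' := by
      have hLO : Measurable fun τ => loF ε b (F τ) := by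
        unfold loF
        exact Measurable.ite (measurableSet_lt measurable_const hFc.measurable)
          measurable_const measurable_const
      have hHI : Measurable fun τ => hiF ε b (F τ) := by
        unfold hiF
        exact Measurable.ite (measurableSet_lt hFc.measurable measurable_const)
          measurable_const measurable_const
      exact hLO.max (hHI.min hsmeas)
    have hs'lo : ∀ τ, 0 ≤ s' τ := fun τ =>
      le_trans (loF_nonneg hε1 _) (le_max_left _ _)
    have hs'hi : ∀ τ, s' τ ≤ 1 := fun τ =>
      max_le (loF_le_one hε.1 _ _) ((min_le_left _ _).trans (hiF_le_one hε1 _))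
    have hs'int : IntegrableOn s' (Iic 0) μ := by
      refine Integrable.mono' (integrable_const 1) hs'meas.aestronglyMeasurable
        (ae_of_all _ fun τ => ?_)
      rw [Real.norm_eq_abs, abs_le]
      exact ⟨by linarith [hs'lo τ], hs'hi τ⟩
    have hs'mem : ∀ τ ≤ (0 : ℝ), s' τ ∈ chiSet ε (π (x₀ τ)) := by
      intro τ hτ
      rw [← hFeq τ hτ, chi_eq hε]
      exact ⟨le_max_left _ _, max_le (loF_le_hiF hb hε.1 hε1 _) (min_le_left _ _)⟩
    have hBmem : (∫ τ in Iic (0 : ℝ), s' τ ∂μ)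
        ∈ aumann (fun τ => chiSet ε (π (x₀ τ))) μ := by
      simp only [aumann, Set.mem_setOf_eq]
      exact ⟨s', hs'meas, hs'int, hs'mem, rfl⟩
    -- pointwise bound on the difference of the selectors
    have hptb : ∀ τ, τ ∈ Iic (0 : ℝ) →
        |s τ - s' τ| ≤ (E m).indicator (fun _ => (1 : ℝ)) τ := by
      intro τ hτ
      have hmem := hsmem τ hτ
      rw [chi_eq hε] at hmem
      have hs0 : 0 ≤ s τ := le_trans (loF_nonneg hε1 _) hmem.1
      have hs1 : s τ ≤ 1 := hmem.2.trans (hiF_le_one hε1 _)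
      by_cases hEτ : τ ∈ E m
      · have h1 : |s τ - s' τ| ≤ 1 := by
          rw [abs_le]
          exact ⟨by linarith [hs'hi τ], by linarith [hs'lo τ]⟩
        rw [Set.indicator_of_mem hEτ]
        exact h1
      · have hdist : |π (x m τ) - F τ| ≤ Real.exp (-(γ * τ)) * δ m := by
          rw [hFeq τ hτ]
          exact hpt m τ hτ
        have hkey := mono_chi (ε := ε) hb hε.1 hε1 hdist hEτ
        have heq : s' τ = s τ := by
          rw [hs'def]
          dsimp only
          rw [min_eq_right (hmem.2.trans hkey.2), max_eq_right (hkey.1.trans hmem.1)]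
        rw [Set.indicator_of_notMem hEτ, heq, sub_self, abs_zero]
    -- the integral estimate
    have hdiff : |(∫ τ in Iic (0 : ℝ), s τ ∂μ) - ∫ τ in Iic (0 : ℝ), s' τ ∂μ|
        ≤ (μ.restrict (Iic (0 : ℝ)) (E m)).toReal := by
      rw [← integral_sub hsint hs'int]
      have h1 : |∫ τ in Iic (0 : ℝ), (s τ - s' τ) ∂μ|
          ≤ ∫ τ in Iic (0 : ℝ), |s τ - s' τ| ∂μ := by
        simpa [Real.norm_eq_abs] using
          norm_integral_le_integral_norm (μ := μ.restrict (Iic (0 : ℝ)))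
            (fun τ => s τ - s' τ)
      refine h1.trans ?_
      have h2 : ∫ τ in Iic (0 : ℝ), |s τ - s' τ| ∂μ
          ≤ ∫ τ in Iic (0 : ℝ), (E m).indicator (fun _ => (1 : ℝ)) τ ∂μ :=
        integral_mono_ae (hsint.sub hs'int).abs ((integrable_const 1).indicator (hEm m))
          ((ae_restrict_iff' measurableSet_Iic).mpr (ae_of_all _ hptb))
      refine h2.trans ?_
      rw [integral_indicator_const (1 : ℝ) (hEm m)]
      simp
      exact le_rfl
    calc sInf ((fun b' => |(∫ τ in Iic (0 : ℝ), s τ ∂μ) - b'|) ''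
          aumann (fun τ => chiSet ε (π (x₀ τ))) μ)
        ≤ |(∫ τ in Iic (0 : ℝ), s τ ∂μ) - ∫ τ in Iic (0 : ℝ), s' τ ∂μ| :=
          csInf_le ⟨0, by rintro z ⟨w, -, rfl⟩; exact abs_nonneg _⟩
            (Set.mem_image_of_mem _ hBmem)
      _ ≤ _ := hdiff
  -- nonnegativity of the directed Hausdorff distance
  have hnn : ∀ m, 0 ≤ hausd (aumann (fun τ => chiSet ε (π (x m τ))) μ)
      (aumann (fun τ => chiSet ε (π (x₀ τ))) μ) := by
    intro m
    unfold hausd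
    apply Real.sSup_nonneg
    rintro y ⟨a, -, rfl⟩
    apply Real.sInf_nonneg
    rintro z ⟨w, -, rfl⟩
    exact abs_nonneg _
  exact squeeze_zero hnn hmain hν

end
end
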